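/- arXiv:1009.3435 — 5 statements merged into one kernel-verified Lean document; each statement's English description precedes it below -/
import Mathlib

section
/- The set of cyclic flats of a matroid M, ordered by inclusion, forms a lattice: for cyclic flats X and Y, their join is cl(X ∪ Y) and their meet is the union of all circuits of M contained in X ∩ Y. -/
open Matroid Set

variable {α : Type*}

/-- An element that lies in every base of `M`; a coloop. -/
def MCoPaper.Coloop (M : Matroid α) (e : α) : Prop := ∀ B, M.IsBase B → e ∈ B

/-- A circuit: a minimal dependent subset of the ground set. -/
def MCoPaper.Circuit (M : Matroid α) (C : Set α) : Prop :=
  C ⊆ M.E ∧ ¬ M.Indep C ∧ ∀ x ∈ C, M.Indep (C \ {x})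

/-- A cyclic flat: a flat whose restriction has no coloops. -/
def MCoPaper.CyclicFlat (M : Matroid α) (F : Set α) : Prop :=
  M.IsFlat F ∧ ∀ e ∈ F, ¬ MCoPaper.Coloop (M ↾ F) e

/-- The rank of a set: the largest cardinality of an independent subset. -/
noncomputable def MCoPaper.rk (M : Matroid α) (X : Set α) : ℕ :=
  sSup {n | ∃ I, M.Indep I ∧ I ⊆ X ∧ I.ncard = n}

open MCoPaper Classical in
/-- Mason's β function. -/
noncomputable def MCoPaper.beta [Fintype α] (M : Matroid α) (X : Finset α) : ℤ :=
  (rk M M.E : ℤ) - rk M ↑X -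
    ∑ Y ∈ (Finset.univ.filter (fun Y : Finset α => CyclicFlat M ↑Y ∧ X ⊂ Y)).attach,
      MCoPaper.beta M Y.1
  termination_by (Fintype.card α - X.card : ℕ)
  decreasing_by
    have hY := Y.2
    simp only [Finset.mem_filter, Finset.mem_univ, true_and] at hY
    have h1 : X.card < Y.1.card := Finset.card_lt_card hY.2
    have h2 : Y.1.card ≤ Fintype.card α := Y.1.card_le_univ
    omega

open MCoPaper Classical in
/-- Mason's α function. -/
noncomputable def MCoPaper.alpha [Fintype α] (M : Matroid α) (X : Finset α) : ℤ :=
  ((X.card : ℤ) - rk M ↑X) -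
    ∑ F ∈ (Finset.univ.filter (fun F : Finset α => M.IsFlat ↑F ∧ F ⊂ X)).attach,
      MCoPaper.alpha M F.1
  termination_by X.card
  decreasing_by
    have hF := F.2
    simp only [Finset.mem_filter, Finset.mem_univ, true_and] at hF
    exact Finset.card_lt_card hF.2

/-- `A : Fin n → Set α` is a presentation of `M`. -/
def MCoPaper.IsPresentation (M : Matroid α) {n : ℕ} (A : Fin n → Set α) : Prop :=
  (∀ i, A i ⊆ M.E) ∧
    ∀ I : Set α, M.Indep I ↔ ∃ φ : α → Fin n, Set.InjOn φ I ∧ ∀ x ∈ I, x ∈ A (φ x)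

/-- `M` is a transversal matroid. -/
def MCoPaper.Transversal (M : Matroid α) : Prop :=
  ∃ (n : ℕ) (A : Fin n → Set α), MCoPaper.IsPresentation M A

/-- `B` is a fundamental basis of `M`. -/
def MCoPaper.FundBasis (M : Matroid α) (B : Set α) : Prop :=
  M.IsBase B ∧ ∀ F, MCoPaper.CyclicFlat M F → F ⊆ M.closure (B ∩ F)

/-- `M` is a fundamental transversal matroid. -/
def MCoPaper.FundTransversal (M : Matroid α) : Prop :=
  ∃ B, MCoPaper.FundBasis M B

open MCoPaper

namespace MCoPaper

variable {M : Matroid α} {C F S X Y Z : Set α}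

lemma circuit_iff_isCircuit : Circuit M C ↔ M.IsCircuit C := by
  rw [isCircuit_iff_dep_forall_sdiff_singleton_indep, Dep, Circuit]
  tauto

lemma coloop_iff_isColoop {e : α} : Coloop M e ↔ M.IsColoop e := by
  rw [isColoop_iff_forall_mem_isBase]
  rfl

lemma cyclicFlat_iff :
    CyclicFlat M F ↔ M.IsFlat F ∧ ∀ e ∈ F, ∃ C ⊆ F, M.IsCircuit C ∧ e ∈ C := by
  refine and_congr_right fun hF ↦ forall₂_congr fun e he ↦ ?_
  simp only [coloop_iff_isColoop, isColoop_iff_forall_notMem_isCircuit (M := M ↾ F) he,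
    restrict_isCircuit_iff hF.subset_ground]
  aesop

lemma cyclicFlat_closure_of_forall_mem_isCircuit
    (hS : ∀ e ∈ S, ∃ C ⊆ S, M.IsCircuit C ∧ e ∈ C) : CyclicFlat M (M.closure S) := by
  have hSE : S ⊆ M.E := fun e he ↦ by
    obtain ⟨C, -, hC, heC⟩ := hS e he
    exact hC.subset_ground heC
  refine cyclicFlat_iff.2 ⟨isFlat_closure S, fun e he ↦ ?_⟩
  by_cases heS : e ∈ S
  · obtain ⟨C, hCS, hC, heC⟩ := hS e heS
    exact ⟨C, hCS.trans (M.subset_closure S hSE), hC, heC⟩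
  · obtain ⟨C, hCS, hC, heC⟩ := exists_isCircuit_of_mem_closure he heS
    exact ⟨C, hCS.trans (insert_subset he (M.subset_closure S hSE)), hC, heC⟩

lemma CyclicFlat.closure_union (hX : CyclicFlat M X) (hY : CyclicFlat M Y) :
    CyclicFlat M (M.closure (X ∪ Y)) := by
  refine cyclicFlat_closure_of_forall_mem_isCircuit fun e he ↦ ?_
  rcases he with heX | heY
  · obtain ⟨C, hCX, hC⟩ := (cyclicFlat_iff.1 hX).2 e heX
    exact ⟨C, hCX.trans subset_union_left, hC⟩
  · obtain ⟨C, hCY, hC⟩ := (cyclicFlat_iff.1 hY).2 e heY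
    exact ⟨C, hCY.trans subset_union_right, hC⟩

lemma CyclicFlat.subset_sUnion_isCircuit_subset (hZ : CyclicFlat M Z) (hZF : Z ⊆ F) :
    Z ⊆ ⋃₀ {C | M.IsCircuit C ∧ C ⊆ F} := fun e he ↦ by
  obtain ⟨C, hCZ, hC, heC⟩ := (cyclicFlat_iff.1 hZ).2 e he
  exact ⟨C, ⟨hC, hCZ.trans hZF⟩, heC⟩

end MCoPaper

namespace Matroid

variable {M : Matroid α} {F X Y : Set α}

lemma IsFlat.inter (hX : M.IsFlat X) (hY : M.IsFlat Y) : M.IsFlat (X ∩ Y) := by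
  refine isFlat_iff_closure_eq.2 <| (subset_inter ?_ ?_).antisymm
    (M.subset_closure _ (inter_subset_left.trans hX.subset_ground))
  · exact (M.closure_subset_closure inter_subset_left).trans hX.closure.subset
  · exact (M.closure_subset_closure inter_subset_right).trans hY.closure.subset

lemma sUnion_isCircuit_subset_subset (F : Set α) :
    ⋃₀ {C | M.IsCircuit C ∧ C ⊆ F} ⊆ F :=
  sUnion_subset fun _ hC ↦ hC.2

/-- The union is closed since an element of its closure lies in `F`, and then so does the
circuit through it given by `exists_isCircuit_of_mem_closure`. -/
lemma IsFlat.cyclicFlat_sUnion_isCircuit_subset (hF : M.IsFlat F) :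
    CyclicFlat M (⋃₀ {C | M.IsCircuit C ∧ C ⊆ F}) := by
  set D := ⋃₀ {C | M.IsCircuit C ∧ C ⊆ F}
  have hDF : D ⊆ F := sUnion_isCircuit_subset_subset F
  have hclD : M.closure D ⊆ D := fun e he ↦ by
    by_contra heD
    have heF : e ∈ F := hF.closure.subset (M.closure_subset_closure hDF he)
    obtain ⟨C, hCD, hC, heC⟩ := exists_isCircuit_of_mem_closure he heD
    exact heD ⟨C, ⟨hC, hCD.trans (insert_subset heF hDF)⟩, heC⟩
  refine cyclicFlat_iff.2 ⟨isFlat_iff_closure_eq.2 <| hclD.antisymm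
    (M.subset_closure D (hDF.trans hF.subset_ground)), ?_⟩
  rintro e ⟨C, hC, heC⟩
  exact ⟨C, subset_sUnion_of_mem hC, hC.1, heC⟩

end Matroid

open Classical in
theorem stmt1_general (M : Matroid α) (X Y : Set α) (hX : CyclicFlat M X)
    (hY : CyclicFlat M Y) :
    (CyclicFlat M (M.closure (X ∪ Y)) ∧ X ⊆ M.closure (X ∪ Y) ∧ Y ⊆ M.closure (X ∪ Y) ∧
      ∀ Z, CyclicFlat M Z → X ⊆ Z → Y ⊆ Z → M.closure (X ∪ Y) ⊆ Z) ∧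
    (CyclicFlat M (⋃₀ {C | Circuit M C ∧ C ⊆ X ∩ Y}) ∧
      ⋃₀ {C | Circuit M C ∧ C ⊆ X ∩ Y} ⊆ X ∧ ⋃₀ {C | Circuit M C ∧ C ⊆ X ∩ Y} ⊆ Y ∧
      ∀ Z, CyclicFlat M Z → Z ⊆ X → Z ⊆ Y → Z ⊆ ⋃₀ {C | Circuit M C ∧ C ⊆ X ∩ Y}) := by
  simp only [circuit_iff_isCircuit]
  have hXYE : X ∪ Y ⊆ M.E := union_subset hX.1.subset_ground hY.1.subset_ground
  have hmeet := sUnion_isCircuit_subset_subset (M := M) (X ∩ Y)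
  refine ⟨⟨hX.closure_union hY, subset_union_left.trans (M.subset_closure _ hXYE),
      subset_union_right.trans (M.subset_closure _ hXYE), fun Z hZ hXZ hYZ ↦ ?_⟩,
    ⟨(hX.1.inter hY.1).cyclicFlat_sUnion_isCircuit_subset, hmeet.trans inter_subset_left,
      hmeet.trans inter_subset_right, fun Z hZ hZX hZY ↦
        hZ.subset_sUnion_isCircuit_subset (subset_inter hZX hZY)⟩⟩
  exact (M.closure_subset_closure (union_subset hXZ hYZ)).trans hZ.1.closure.subset

open Classical in
theorem stmt1 [Fintype α] (M : Matroid α) (X Y : Set α) (hX : CyclicFlat M X)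
    (hY : CyclicFlat M Y) :
    (CyclicFlat M (M.closure (X ∪ Y)) ∧ X ⊆ M.closure (X ∪ Y) ∧ Y ⊆ M.closure (X ∪ Y) ∧
      ∀ Z, CyclicFlat M Z → X ⊆ Z → Y ⊆ Z → M.closure (X ∪ Y) ⊆ Z) ∧
    (CyclicFlat M (⋃₀ {C | Circuit M C ∧ C ⊆ X ∩ Y}) ∧
      ⋃₀ {C | Circuit M C ∧ C ⊆ X ∩ Y} ⊆ X ∧ ⋃₀ {C | Circuit M C ∧ C ⊆ X ∩ Y} ⊆ Y ∧
      ∀ Z, CyclicFlat M Z → Z ⊆ X → Z ⊆ Y → Z ⊆ ⋃₀ {C | Circuit M C ∧ C ⊆ X ∩ Y}) :=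
  stmt1_general M X Y hX hY
end

section
/- If (A_1, …, A_r) is a presentation of a transversal matroid M, then the complement E(M) − A_i is a flat of M for each i. -/
open Matroid Set

variable {α : Type*}

/-! A matching of an independent set `I ⊆ E - A_i` never uses the set `A_i`, so any `e ∈ A_i` can
be matched to it and `I + e` stays independent. Hence no element of `A_i` lies in the closure
of `E - A_i`. -/

def IsPartialTransversal {ι : Type*} (A : ι → Set α) (I : Set α) : Prop :=
  ∃ φ : α → ι, InjOn φ I ∧ ∀ x ∈ I, x ∈ A (φ x)

lemma IsPartialTransversal.insert_of_disjoint {ι : Type*} {A : ι → Set α}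
    {I : Set α} {i : ι} {e : α} (hI : IsPartialTransversal A I) (hIA : Disjoint I (A i))
    (he : e ∈ A i) : IsPartialTransversal A (insert e I) := by
  classical
  obtain ⟨φ, hφinj, hφA⟩ := hI
  have heI : e ∉ I := fun h => hIA.notMem_of_mem_right he h
  have hupdate : EqOn (Function.update φ e i) φ I := fun x hx =>
    Function.update_of_ne (ne_of_mem_of_not_mem hx heI) _ _
  refine ⟨Function.update φ e i, ?_, ?_⟩
  · rw [injOn_insert heI, hupdate.image_eq, Function.update_self]
    refine ⟨hφinj.congr hupdate.symm, ?_⟩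
    rintro ⟨x, hx, hxi⟩
    exact hIA.notMem_of_mem_left hx (hxi ▸ hφA x hx)
  · rintro x (rfl | hx)
    · rwa [Function.update_self]
    · rw [hupdate hx]
      exact hφA x hx

lemma Matroid.isFlat_of_forall_insert_indep (M : Matroid α) {F : Set α} (hF : F ⊆ M.E)
    (h : ∀ I e, M.Indep I → I ⊆ F → e ∈ M.E \ F → M.Indep (insert e I)) : M.IsFlat F := by
  refine isFlat_iff_closure_eq.2 (subset_antisymm (fun e he => ?_) (M.subset_closure F))
  by_contra heF
  obtain ⟨I, hI⟩ := M.exists_isBasis F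
  have heI : e ∉ I := fun h => heF (hI.subset h)
  rw [← hI.closure_eq_closure, hI.indep.mem_closure_iff_of_notMem heI] at he
  exact he.not_indep (h I e hI.indep hI.subset ⟨he.subset_ground (mem_insert e I), heF⟩)

open MCoPaper

theorem stmt4_general (M : Matroid α) {n : ℕ} (A : Fin n → Set α)
    (hA : IsPresentation M A) (i : Fin n) :
    M.IsFlat (M.E \ A i) := by
  refine M.isFlat_of_forall_insert_indep sdiff_subset fun I e hI hIF he => ?_
  have heA : e ∈ A i := by_contra fun heA => he.2 ⟨he.1, heA⟩
  exact (hA.2 _).2 <| IsPartialTransversal.insert_of_disjoint ((hA.2 I).1 hI)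
    (subset_sdiff.1 hIF).2 heA

theorem stmt4 [Fintype α] (M : Matroid α) {n : ℕ} (A : Fin n → Set α)
    (hA : IsPresentation M A) (i : Fin n) :
    M.IsFlat (M.E \ A i) :=
  stmt4_general M A hA i
end

section
/- If (A_1, …, A_r) is a presentation of a transversal matroid M and x is a coloop of M \ A_i (the deletion of A_i), then replacing A_i by A_i ∪ {x} yields another presentation of M. -/
open Matroid Set

variable {α : Type*}

/-!
Enlarging `A i` keeps independent sets matchable, so only the converse needs an argument. A set
matched into the enlarged family is either matched into `A`, or it is `insert x J` with `J`
matched into the `A j`, `j ≠ i`. If such an `insert x J` were not matchable into `A`, Hall's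
theorem would give a deficient `W ⊆ insert x J`; since `W \ {x}` is matched avoiding `i`, counting
neighbours shows that `i` is not a neighbour of `W`, i.e. `W ⊆ E \ A i`. But `W \ {x} ⊆ J` is
independent and `x` is a coloop of `M ↾ (E \ A i)`, so `W` is independent, contradicting its
deficiency.
-/

namespace MCoPaper

variable {ι : Type*}

def Matchable (A : ι → Set α) (I : Set α) : Prop :=
  ∃ φ : α → ι, InjOn φ I ∧ ∀ a ∈ I, a ∈ A (φ a)

def neighbors (A : ι → Set α) (W : Set α) : Set ι := {j | ∃ a ∈ W, a ∈ A j}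

section Matchable

variable {A A' : ι → Set α} {I J W : Set α}

lemma Matchable.subset (h : Matchable A J) (hIJ : I ⊆ J) : Matchable A I :=
  let ⟨φ, hinj, hφ⟩ := h
  ⟨φ, hinj.mono hIJ, fun a ha => hφ a (hIJ ha)⟩

lemma Matchable.mono (h : Matchable A I) (hAA' : A ≤ A') : Matchable A' I :=
  let ⟨φ, hinj, hφ⟩ := h
  ⟨φ, hinj, fun a ha => hAA' _ (hφ a ha)⟩

lemma Matchable.ncard_le_ncard_neighbors [Finite ι] (h : Matchable A W) :
    W.ncard ≤ (neighbors A W).ncard := by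
  obtain ⟨φ, hinj, hφ⟩ := h
  rw [← hinj.ncard_image]
  exact ncard_le_ncard (image_subset_iff.2 fun a ha => ⟨a, ha, hφ a ha⟩)

lemma matchable_of_forall_ncard_le [Finite ι] (hne : Nonempty (α → ι))
    (h : ∀ W ⊆ I, W.ncard ≤ (neighbors A W).ncard) : Matchable A I := by
  classical
  have := Fintype.ofFinite ι
  obtain ⟨f, hf, hfA⟩ := (Fintype.all_card_le_filter_rel_iff_exists_injective
    fun (a : I) (j : ι) => (a : α) ∈ A j).1 fun s => by
      have hneighbors : (({j | ∃ a ∈ s, (a : α) ∈ A j} : Finset ι) : Set ι) =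
          neighbors A (Subtype.val '' (s : Set I)) := by
        ext j; simp [neighbors]
      have hs := h (Subtype.val '' (s : Set I)) (by simp)
      rwa [ncard_image_of_injective _ Subtype.val_injective, ncard_coe_finset, ← hneighbors,
        ncard_coe_finset] at hs
  obtain ⟨φ₀⟩ := hne
  refine ⟨fun a => if ha : a ∈ I then f ⟨a, ha⟩ else φ₀ a, fun a ha b hb hab => ?_,
    fun a ha => ?_⟩
  · simp only [dif_pos ha, dif_pos hb] at hab
    exact congrArg Subtype.val (hf hab)
  · simpa only [dif_pos ha] using hfA ⟨a, ha⟩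

lemma exists_ncard_neighbors_lt_of_not_matchable [Finite ι] (hne : Nonempty (α → ι))
    (h : ¬ Matchable A I) : ∃ W ⊆ I, (neighbors A W).ncard < W.ncard := by
  by_contra! hall
  exact h (matchable_of_forall_ncard_le hne hall)

variable [DecidableEq ι] {i : ι} {x : α}

lemma Matchable.of_update_union_singleton (h : Matchable (Function.update A i (A i ∪ {x})) I) :
    Matchable A I ∨ x ∈ I ∧ Matchable (Function.update A i ∅) (I \ {x}) := by
  obtain ⟨φ, hinj, hφ⟩ := h
  by_cases hAi : ∀ a ∈ I, φ a = i → a ∈ A i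
  · refine Or.inl ⟨φ, hinj, fun a ha => ?_⟩
    rcases eq_or_ne (φ a) i with hai | hai
    · exact hai ▸ hAi a ha hai
    · simpa [Function.update_of_ne hai] using hφ a ha
  push Not at hAi
  obtain ⟨a, ha, hai, haA⟩ := hAi
  have hax : a = x := by simpa [hai, haA] using hφ a ha
  subst hax
  refine Or.inr ⟨ha, φ, hinj.mono sdiff_subset, fun b ⟨hb, hba⟩ => ?_⟩
  have hbi : φ b ≠ i := fun hbi => hba (hinj hb ha (hbi.trans hai.symm))
  simpa [Function.update_of_ne hbi] using hφ b hb

lemma exists_disjoint_not_matchable [Finite ι] (hne : Nonempty (α → ι))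
    (hJ : Matchable (Function.update A i ∅) J) (h : ¬ Matchable A (insert x J)) :
    ∃ W ⊆ insert x J, Disjoint W (A i) ∧ ¬ Matchable A W := by
  obtain ⟨W, hWJ, hlt⟩ := exists_ncard_neighbors_lt_of_not_matchable hne h
  refine ⟨W, hWJ, disjoint_left.2 fun y hyW hyA => ?_,
    fun hW => hlt.not_ge hW.ncard_le_ncard_neighbors⟩
  have hi : i ∈ neighbors A W := ⟨y, hyW, hyA⟩
  have hsub : neighbors (Function.update A i ∅) (W \ {x}) ⊆ neighbors A W \ {i} := by
    rintro j ⟨a, ⟨haW, -⟩, haj⟩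
    rcases eq_or_ne j i with rfl | hji
    · simp at haj
    · exact ⟨⟨a, haW, by simpa [Function.update_of_ne hji] using haj⟩, hji⟩
  have hmatch : (W \ {x}).ncard ≤ (neighbors A W \ {i}).ncard :=
    (hJ.subset (sdiff_subset_iff.2 hWJ)).ncard_le_ncard_neighbors.trans (ncard_le_ncard hsub)
  have hW := pred_ncard_le_ncard_sdiff_singleton W x
  have hN := ncard_sdiff_singleton_add_one hi
  omega

end Matchable

section IsPresentation

variable {M : Matroid α} {n : ℕ} {A : Fin n → Set α}

lemma IsPresentation.indep_iff (hA : IsPresentation M A) {I : Set α} :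
    M.Indep I ↔ Matchable A I :=
  hA.2 I

lemma IsPresentation.indep_insert (hA : IsPresentation M A) {i : Fin n} {x : α}
    (hx : (M ↾ (M.E \ A i)).IsColoop x) {J : Set α}
    (hJ : Matchable (Function.update A i ∅) J) : M.Indep (insert x J) := by
  have hne : Nonempty (α → Fin n) := let ⟨φ, _⟩ := hA.indep_iff.1 M.empty_indep; ⟨φ⟩
  have hJA : M.Indep J := hA.indep_iff.2 (hJ.mono (update_le_self_iff.2 (empty_subset _)))
  by_contra hdep
  obtain ⟨W, hWJ, hWA, hW⟩ := exists_disjoint_not_matchable hne hJ (mt hA.indep_iff.2 hdep)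
  have hWx : W \ {x} ⊆ J := sdiff_subset_iff.2 hWJ
  have hWxE : W \ {x} ⊆ M.E \ A i := fun a ha =>
    ⟨hJA.subset_ground (hWx ha), disjoint_left.1 hWA ha.1⟩
  have hindep := hx.insert_indep_of_indep (restrict_indep_iff.2 ⟨hJA.subset hWx, hWxE⟩)
  exact hW (hA.indep_iff.1
    ((restrict_indep_iff.1 hindep).1.subset (subset_insert_sdiff_singleton x W)))

end IsPresentation

end MCoPaper

open MCoPaper

theorem stmt5_general (M : Matroid α) {n : ℕ} (A : Fin n → Set α)
    (hA : IsPresentation M A) (i : Fin n) (x : α)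
    (hx : Coloop (M ↾ (M.E \ A i)) x) :
    IsPresentation M (Function.update A i (A i ∪ {x})) := by
  have hx : (M ↾ (M.E \ A i)).IsColoop x := isColoop_iff_forall_mem_isBase.2 fun B hB => hx B hB
  have hxE : x ∈ M.E := hx.mem_ground.1
  refine ⟨(Function.forall_update_iff A fun _ s => s ⊆ M.E).2
      ⟨union_subset (hA.1 i) (singleton_subset_iff.2 hxE), fun j _ => hA.1 j⟩,
    fun I => ⟨fun hI => (hA.indep_iff.1 hI).mono (le_update_self_iff.2 subset_union_left),
      fun hI => ?_⟩⟩
  rcases Matchable.of_update_union_singleton hI with hI | ⟨hxI, hJ⟩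
  · exact hA.indep_iff.2 hI
  · simpa [insert_eq_of_mem hxI] using hA.indep_insert hx hJ

theorem stmt5 [Fintype α] (M : Matroid α) {n : ℕ} (A : Fin n → Set α)
    (hA : IsPresentation M A) (i : Fin n) (x : α)
    (hx : Coloop (M ↾ (M.E \ A i)) x) :
    IsPresentation M (Function.update A i (A i ∪ {x})) :=
  stmt5_general M A hA i x hx
end

section
/- If B is a fundamental basis of a matroid M, then for every nonempty family F of cyclic flats of M, r(⋃F) = |B ∩ (⋃F)| and r(⋂F) = |B ∩ (⋂F)|. -/
open Matroid Set

variable {α : Type*}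

open MCoPaper

/-
A fundamental basis `B` meets every cyclic flat `Y` in a basis of `Y`. This property passes to
unions by monotonicity of closure, and to nonempty intersections because closure commutes with
intersections of subsets of one independent set: `cl (⋂ (B ∩ Y)) = ⋂ cl (B ∩ Y) ⊇ ⋂ Y`.
-/
namespace MCoPaper

variable {M : Matroid α} {B I X : Set α} {S : Set (Set α)}

/- In infinite rank both sides are junk values that agree: `sSup` of an unbounded set of naturals
and `ENat.toNat ⊤` are both `0`. -/
lemma rk_eq_toNat_eRk (M : Matroid α) (X : Set α) : rk M X = (M.eRk X).toNat := by
  have hmem : ∀ n : ℕ, (n : ℕ∞) ≤ M.eRk X →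
      n ∈ {n | ∃ I, M.Indep I ∧ I ⊆ X ∧ I.ncard = n} := by
    intro n hn
    obtain ⟨I, hIX, hI, hIn⟩ := le_eRk_iff.1 hn
    exact ⟨I, hI, hIX, by rw [ncard_def, hIn, ENat.toNat_natCast]⟩
  cases h : M.eRk X with
  | top =>
    refine Nat.sSup_of_not_bddAbove fun ⟨b, hb⟩ => ?_
    exact b.not_succ_le_self (hb (hmem (b + 1) (h ▸ le_top)))
  | coe k =>
    refine IsGreatest.csSup_eq ⟨hmem k h.ge, ?_⟩
    rintro n ⟨I, hI, hIX, rfl⟩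
    have hle : I.encard ≤ k := h ▸ hI.encard_le_eRk_of_subset hIX
    rw [ENat.toNat_natCast, ncard_def]
    exact ENat.toNat_le_of_le_natCast hle

lemma rk_eq_ncard_of_isBasis' (h : M.IsBasis' I X) : rk M X = I.ncard := by
  rw [rk_eq_toNat_eRk, ← h.encard_eq_eRk, ncard_def]

lemma rk_eq_ncard_inter_of_subset_closure (hB : M.Indep B) (hX : X ⊆ M.closure (B ∩ X)) :
    rk M X = (B ∩ X).ncard :=
  rk_eq_ncard_of_isBasis'
    ((hB.inter_right X).isBasis_of_subset_of_subset_closure inter_subset_right hX).isBasis'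

lemma sUnion_subset_closure_inter_sUnion (hS : ∀ Y ∈ S, Y ⊆ M.closure (B ∩ Y)) :
    ⋃₀ S ⊆ M.closure (B ∩ ⋃₀ S) :=
  sUnion_subset fun Y hY => (hS Y hY).trans
    (M.closure_subset_closure (inter_subset_inter_right B (subset_sUnion_of_mem hY)))

lemma sInter_subset_closure_inter_sInter (hB : M.Indep B) (hne : S.Nonempty)
    (hS : ∀ Y ∈ S, Y ⊆ M.closure (B ∩ Y)) : ⋂₀ S ⊆ M.closure (B ∩ ⋂₀ S) := by
  have : Nonempty S := hne.to_subtype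
  rw [sInter_eq_iInter, inter_iInter,
    hB.closure_iInter_eq_biInter_closure_of_forall_subset fun _ => inter_subset_left]
  exact subset_iInter fun Y => (iInter_subset _ Y).trans (hS Y Y.2)

end MCoPaper

theorem stmt10_general (M : Matroid α) (B : Set α) (hB : FundBasis M B)
    (F : Finset (Set α)) (hne : F.Nonempty) (hcf : ∀ Y ∈ F, CyclicFlat M Y) :
    rk M (⋃₀ ↑F) = (B ∩ ⋃₀ ↑F).ncard ∧ rk M (⋂₀ ↑F) = (B ∩ ⋂₀ ↑F).ncard := by
  have hBi : M.Indep B := hB.1.indep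
  have hspan : ∀ Y ∈ (F : Set (Set α)), Y ⊆ M.closure (B ∩ Y) := fun Y hY => hB.2 Y (hcf Y hY)
  exact ⟨rk_eq_ncard_inter_of_subset_closure hBi (sUnion_subset_closure_inter_sUnion hspan),
    rk_eq_ncard_inter_of_subset_closure hBi (sInter_subset_closure_inter_sInter hBi hne.to_set hspan)⟩

theorem stmt10 [Fintype α] (M : Matroid α) (B : Set α) (hB : FundBasis M B)
    (F : Finset (Set α)) (hne : F.Nonempty) (hcf : ∀ Y ∈ F, CyclicFlat M Y) :
    rk M (⋃₀ ↑F) = (B ∩ ⋃₀ ↑F).ncard ∧ rk M (⋂₀ ↑F) = (B ∩ ⋂₀ ↑F).ncard :=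
  stmt10_general M B hB F hne hcf
end

section
/- If a finite matroid M satisfies r(⋃F) ≥ Σ_{∅≠F'⊆F} (−1)^{|F'|+1} r(⋂F') for all families F of intersections of cyclic flats, then equality holds in this inequality for all such families F. -/
open Matroid Set

variable {α : Type*}

open MCoPaper

/-!
Induction on `F = insert A F₀`. Semimodularity gives
`r (A ∪ ⋃ F₀) ≤ r A + r (⋃ F₀) - r (A ∩ ⋃ F₀)`. The induction hypothesis bounds `r (⋃ F₀)` by
its inclusion–exclusion sum, and the assumed inequality, applied to the family
`{X ∩ A | X ∈ F₀}` of intersections of cyclic flats whose union is `A ∩ ⋃ F₀`, bounds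
`r (A ∩ ⋃ F₀)` from below. The three inclusion–exclusion sums combine into the one for `F`,
because an alternating sum over subfamilies of `F₀` only depends on them through their images
under `X ↦ X ∩ A`.
-/

namespace Finset

variable {β γ R : Type*} [CommRing R]

lemma sum_powerset_insert_neg_one_pow_card_mul [DecidableEq γ] {s : Finset γ} {a : γ}
    (ha : a ∉ s) (g : Finset γ → R) :
    ∑ t ∈ (insert a s).powerset, (-1) ^ t.card * g t =
      ∑ t ∈ s.powerset, (-1) ^ t.card * g t - ∑ t ∈ s.powerset, (-1) ^ t.card * g (insert a t) := by
  rw [sum_powerset_insert ha, sub_eq_add_neg, ← sum_neg_distrib]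
  congr 1
  refine sum_congr rfl fun t ht => ?_
  rw [card_insert_of_notMem fun h => ha (mem_powerset.mp ht h), pow_succ]
  ring

lemma sum_powerset_neg_one_pow_card_mul_insert_of_mem [DecidableEq γ] {s : Finset γ} {b : γ}
    (hb : b ∈ s) (g : Finset γ → R) :
    ∑ t ∈ s.powerset, (-1) ^ t.card * g (insert b t) = 0 := by
  rw [← insert_erase hb, sum_powerset_insert_neg_one_pow_card_mul (notMem_erase b s)]
  simp only [insert_idem, sub_self]

-- The subsets of `s` with a given image `u` have signs summing to `(-1) ^ u.card`.
lemma sum_powerset_neg_one_pow_card_mul_image [DecidableEq γ] (f : β → γ) (s : Finset β)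
    (g : Finset γ → R) :
    ∑ t ∈ s.powerset, (-1) ^ t.card * g (t.image f) =
      ∑ u ∈ (s.image f).powerset, (-1) ^ u.card * g u := by
  classical
  induction s using Finset.induction_on generalizing g with
  | empty => simp
  | insert a s ha ih =>
    rw [sum_powerset_insert_neg_one_pow_card_mul ha]
    simp only [image_insert]
    rw [ih, ih fun u => g (insert (f a) u)]
    by_cases hfa : f a ∈ s.image f
    · rw [insert_eq_of_mem hfa, sum_powerset_neg_one_pow_card_mul_insert_of_mem hfa, sub_zero]
    · rw [sum_powerset_insert_neg_one_pow_card_mul hfa]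

end Finset

section InclusionExclusion

variable {R : Type*} [CommRing R]

def inclExclSum (φ : Set α → R) (F : Finset (Set α)) : R :=
  ∑ F' ∈ F.powerset.filter (fun F' => F'.Nonempty), (-1) ^ (F'.card + 1) * φ (⋂₀ ↑F')

lemma inclExclSum_eq_sub (φ : Set α → R) (F : Finset (Set α)) :
    inclExclSum φ F = φ univ - ∑ t ∈ F.powerset, (-1) ^ t.card * φ (⋂₀ ↑t) := by
  have hempty : F.powerset.filter (fun t => ¬ t.Nonempty) = {∅} := by
    ext t
    simp only [Finset.mem_filter, Finset.mem_powerset, Finset.not_nonempty_iff_eq_empty,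
      Finset.mem_singleton]
    exact ⟨And.right, fun h => ⟨h ▸ F.empty_subset, h⟩⟩
  rw [← Finset.sum_filter_add_sum_filter_not F.powerset (fun t => t.Nonempty), hempty,
    Finset.sum_singleton, inclExclSum]
  simp only [pow_succ, Finset.card_empty, pow_zero, one_mul, Finset.coe_empty, sInter_empty,
    mul_neg, mul_one, neg_mul, Finset.sum_neg_distrib]
  ring

lemma inter_sInter_image_inter (A : Set α) (t : Finset (Set α)) [DecidableEq (Set α)] :
    A ∩ ⋂₀ ↑(t.image (· ∩ A)) = A ∩ ⋂₀ ↑t := by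
  ext x
  simp only [Finset.coe_image, sInter_image, mem_inter_iff, mem_iInter, Finset.mem_coe,
    mem_sInter]
  grind

lemma sUnion_image_inter (A : Set α) (F : Finset (Set α)) [DecidableEq (Set α)] :
    ⋃₀ ↑(F.image (· ∩ A)) = (⋃₀ ↑F) ∩ A := by
  rw [Finset.coe_image, sUnion_image, sUnion_eq_biUnion, iUnion₂_inter]

lemma inclExclSum_insert [DecidableEq (Set α)] (φ : Set α → R) {A : Set α}
    {F : Finset (Set α)} (hA : A ∉ F) :
    inclExclSum φ (insert A F) = inclExclSum φ F + φ A - inclExclSum φ (F.image (· ∩ A)) := by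
  have hsub : ∀ t ∈ (F.image (· ∩ A)).powerset.filter (fun t => t.Nonempty),
      ⋂₀ (↑t : Set (Set α)) ⊆ A := by
    intro t ht
    obtain ⟨ht, X, hX⟩ := Finset.mem_filter.mp ht
    obtain ⟨Y, -, rfl⟩ := Finset.mem_image.mp (Finset.mem_powerset.mp ht hX)
    exact (sInter_subset_of_mem hX).trans inter_subset_right
  have hG : inclExclSum φ (F.image (· ∩ A)) =
      inclExclSum (fun X => φ (A ∩ X)) (F.image (· ∩ A)) := by
    refine Finset.sum_congr rfl fun t ht => ?_
    dsimp only
    rw [inter_eq_self_of_subset_right (hsub t ht)]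
  have hcollapse : ∑ t ∈ F.powerset, (-1) ^ t.card * φ (A ∩ ⋂₀ ↑t) =
      ∑ u ∈ (F.image (· ∩ A)).powerset, (-1) ^ u.card * φ (A ∩ ⋂₀ ↑u) := by
    rw [← Finset.sum_powerset_neg_one_pow_card_mul_image (· ∩ A) F fun u => φ (A ∩ ⋂₀ ↑u)]
    simp only [inter_sInter_image_inter]
  rw [hG, inclExclSum_eq_sub, inclExclSum_eq_sub, inclExclSum_eq_sub,
    Finset.sum_powerset_insert_neg_one_pow_card_mul hA, ← hcollapse, inter_univ]
  simp only [Finset.coe_insert, sInter_insert]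
  ring

@[simp]
lemma inclExclSum_empty (φ : Set α → R) : inclExclSum φ ∅ = 0 := by
  simp [inclExclSum, Finset.filter_singleton]

@[simp]
lemma inclExclSum_singleton (φ : Set α → R) (A : Set α) : inclExclSum φ {A} = φ A := by
  classical
  simpa using inclExclSum_insert φ (Finset.notMem_empty A)

end InclusionExclusion

theorem sUnion_le_inclExclSum {𝒦 : Set (Set α)} (h𝒦 : ∀ X ∈ 𝒦, ∀ Y ∈ 𝒦, X ∩ Y ∈ 𝒦)
    {φ : Set α → ℤ} (hφ : ∀ X Y, φ (X ∩ Y) + φ (X ∪ Y) ≤ φ X + φ Y)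
    (hge : ∀ F : Finset (Set α), F.Nonempty → (∀ X ∈ F, X ∈ 𝒦) →
      inclExclSum φ F ≤ φ (⋃₀ ↑F))
    {F : Finset (Set α)} (hF : F.Nonempty) (hF𝒦 : ∀ X ∈ F, X ∈ 𝒦) :
    φ (⋃₀ ↑F) ≤ inclExclSum φ F := by
  classical
  induction hF using Finset.Nonempty.cons_induction with
  | singleton A =>
    simp
  | cons A F₀ hA hF₀ ih =>
    simp only [Finset.cons_eq_insert, Finset.mem_insert, forall_eq_or_imp] at hF𝒦 ⊢
    have hG : inclExclSum φ (F₀.image (· ∩ A)) ≤ φ ((⋃₀ ↑F₀) ∩ A) := by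
      rw [← sUnion_image_inter]
      refine hge _ (hF₀.image _) fun X hX => ?_
      obtain ⟨Y, hY, rfl⟩ := Finset.mem_image.mp hX
      exact h𝒦 Y (hF𝒦.2 Y hY) A hF𝒦.1
    have hsub := hφ (⋃₀ ↑F₀) A
    rw [Finset.coe_insert, sUnion_insert, inclExclSum_insert φ hA, union_comm]
    linarith [ih hF𝒦.2]

namespace MCoPaper

lemma cast_rk_eq_eRk [Finite α] (M : Matroid α) (X : Set α) : (rk M X : ℕ∞) = M.eRk X := by
  obtain ⟨I, hI⟩ := M.exists_isBasis' X
  have hIfin : I.Finite := toFinite I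
  have hmax : IsGreatest {n | ∃ J, M.Indep J ∧ J ⊆ X ∧ J.ncard = n} I.ncard := by
    refine ⟨⟨I, hI.indep, hI.subset, rfl⟩, ?_⟩
    rintro _ ⟨J, hJ, hJX, rfl⟩
    have h := hJ.encard_le_eRk_of_subset hJX
    rw [← hI.encard_eq_eRk, ← (toFinite J).cast_ncard_eq, ← hIfin.cast_ncard_eq] at h
    exact_mod_cast h
  rw [rk, hmax.csSup_eq, hIfin.cast_ncard_eq, hI.encard_eq_eRk]

lemma rk_inter_add_rk_union_le [Finite α] (M : Matroid α) (X Y : Set α) :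
    (rk M (X ∩ Y) : ℤ) + rk M (X ∪ Y) ≤ rk M X + rk M Y := by
  have h := M.eRk_inter_add_eRk_union_le X Y
  simp only [← cast_rk_eq_eRk] at h
  exact_mod_cast h

def IsCyclicFlatInter (M : Matroid α) (X : Set α) : Prop :=
  ∃ G : Finset (Set α), G.Nonempty ∧ (∀ Y ∈ G, CyclicFlat M Y) ∧ X = ⋂₀ ↑G

lemma IsCyclicFlatInter.inter {M : Matroid α} {X Y : Set α} (hX : IsCyclicFlatInter M X)
    (hY : IsCyclicFlatInter M Y) : IsCyclicFlatInter M (X ∩ Y) := by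
  classical
  obtain ⟨G, hG, hGM, rfl⟩ := hX
  obtain ⟨H, -, hHM, rfl⟩ := hY
  refine ⟨G ∪ H, hG.mono Finset.subset_union_left, fun Z hZ => ?_, ?_⟩
  · exact (Finset.mem_union.mp hZ).elim (hGM Z) (hHM Z)
  · rw [Finset.coe_union, sInter_union]

end MCoPaper

open Classical in
theorem stmt17 [Fintype α] (M : Matroid α)
    (h : ∀ F : Finset (Set α), F.Nonempty →
      (∀ X ∈ F, ∃ G : Finset (Set α), G.Nonempty ∧ (∀ Y ∈ G, CyclicFlat M Y) ∧ X = ⋂₀ ↑G) →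
      ∑ F' ∈ F.powerset.filter (fun F' => F'.Nonempty),
          (-1) ^ (F'.card + 1) * (rk M (⋂₀ ↑F') : ℤ) ≤ (rk M (⋃₀ ↑F) : ℤ)) :
    ∀ F : Finset (Set α), F.Nonempty →
      (∀ X ∈ F, ∃ G : Finset (Set α), G.Nonempty ∧ (∀ Y ∈ G, CyclicFlat M Y) ∧ X = ⋂₀ ↑G) →
      (rk M (⋃₀ ↑F) : ℤ) =
        ∑ F' ∈ F.powerset.filter (fun F' => F'.Nonempty),
          (-1) ^ (F'.card + 1) * (rk M (⋂₀ ↑F') : ℤ) := by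
  intro F hF hFM
  refine le_antisymm ?_ (h F hF hFM)
  exact sUnion_le_inclExclSum (𝒦 := {X | IsCyclicFlatInter M X})
    (fun X hX Y hY => IsCyclicFlatInter.inter hX hY) (rk_inter_add_rk_union_le M) h hF hFM
end
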